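/- Let M and X be d×d real symmetric positive-definite matrices, let S_1 and S_2 be d×d real symmetric matrices, and let L be the solution of the Lyapunov equation X·L + L·X = S_1. Then L' = M^{-1/2}·L·M^{-1/2} solves the generalized Lyapunov equation (M^{1/2}·X·M^{1/2})·L'·M + M·L'·(M^{1/2}·X·M^{1/2}) = M^{1/2}·S_1·M^{1/2}, and tr(L' · (M^{1/2}·S_2·M^{1/2})) = tr(L·S_2). Hence the map φ(X) = M^{1/2}·X·M^{1/2}, whose differential sends S to M^{1/2}·S·M^{1/2}, pulls the generalized Bures–Wasserstein inner product with parameter M back to the Bures–Wasserstein inner product. -/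

import Mathlib

/-! Writing `R = M^{1/2}`, the substitution `L' = R⁻¹ L R⁻¹` turns each factor `M` of the generalized
Lyapunov operator into `R · R`, and the resulting `R⁻¹ R` pairs cancel; the trace identity is
cyclicity of the trace. -/

open Matrix
open scoped Classical

/-- The unique positive semidefinite square root of a positive semidefinite matrix
(in particular the unique positive-definite square root of a positive-definite matrix);
junk value `0` otherwise. -/
noncomputable def sqrtm {d : ℕ} (X : Matrix (Fin d) (Fin d) ℝ) : Matrix (Fin d) (Fin d) ℝ :=
  if h : X.PosSemidef then
    (h.1.eigenvectorUnitary : Matrix (Fin d) (Fin d) ℝ) *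
      diagonal ((↑) ∘ (√·) ∘ h.1.eigenvalues) *
      (star h.1.eigenvectorUnitary : Matrix (Fin d) (Fin d) ℝ)
  else 0

theorem sqrtm_mul_self {d : ℕ} {X : Matrix (Fin d) (Fin d) ℝ} (hX : X.PosSemidef) :
    sqrtm X * sqrtm X = X := by
  set U : Matrix (Fin d) (Fin d) ℝ := ↑hX.1.eigenvectorUnitary
  have hD : diagonal ((↑) ∘ (√·) ∘ hX.1.eigenvalues) *
      diagonal ((↑) ∘ (√·) ∘ hX.1.eigenvalues) =
      diagonal (RCLike.ofReal ∘ hX.1.eigenvalues : Fin d → ℝ) := by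
    rw [diagonal_mul_diagonal]
    congr 1 with i
    simp [Real.mul_self_sqrt (hX.eigenvalues_nonneg i)]
  have hU : star U * U = 1 := by simp [U]
  conv_rhs => rw [hX.1.spectral_theorem, Unitary.conjStarAlgAut_apply, ← hD]
  rw [sqrtm, dif_pos hX]
  calc _ = U * diagonal _ * (star U * U) * diagonal _ * star U := by noncomm_ring
    _ = _ := by rw [hU, mul_one, mul_assoc U]

theorem isUnit_det_sqrtm {d : ℕ} {M : Matrix (Fin d) (Fin d) ℝ} (hM : M.PosDef) :
    IsUnit (sqrtm M).det := by
  refine isUnit_of_mul_isUnit_left (y := (sqrtm M).det) ?_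
  rw [← det_mul, sqrtm_mul_self hM.posSemidef]
  exact hM.isUnit.map detMonoidHom

section Congruence

variable {n α : Type*} [Fintype n] [DecidableEq n] [CommRing α] {R : Matrix n n α}

theorem generalized_lyapunov_congr (hR : IsUnit R.det) {M X L S : Matrix n n α} (hRR : R * R = M)
    (hL : X * L + L * X = S) :
    (R * X * R) * (R⁻¹ * L * R⁻¹) * M + M * (R⁻¹ * L * R⁻¹) * (R * X * R) = R * S * R := by
  have hRinv : R * R⁻¹ = 1 := mul_nonsing_inv R hR
  have hinvR : R⁻¹ * R = 1 := nonsing_inv_mul R hR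
  subst hRR hL
  calc _ = R * X * (R * R⁻¹) * L * (R⁻¹ * R) * R + R * (R * R⁻¹) * L * (R⁻¹ * R) * X * R := by
        noncomm_ring
    _ = _ := by rw [hRinv, hinvR]; noncomm_ring

theorem trace_inv_congr_mul_congr (hR : IsUnit R.det) (L S : Matrix n n α) :
    ((R⁻¹ * L * R⁻¹) * (R * S * R)).trace = (L * S).trace := by
  calc _ = (R⁻¹ * (L * S) * R).trace := by
        rw [show (R⁻¹ * L * R⁻¹) * (R * S * R) = R⁻¹ * L * (R⁻¹ * R) * S * R by noncomm_ring,
          nonsing_inv_mul R hR]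
        noncomm_ring
    _ = _ := by rw [trace_mul_cycle, ← mul_assoc, mul_nonsing_inv R hR, one_mul]

end Congruence

theorem stmt_7_general {d : ℕ} (M X : Matrix (Fin d) (Fin d) ℝ) (hM : M.PosDef)
    (S₁ S₂ : Matrix (Fin d) (Fin d) ℝ)
    (L : Matrix (Fin d) (Fin d) ℝ) (hL : X * L + L * X = S₁) :
    (sqrtm M * X * sqrtm M) * ((sqrtm M)⁻¹ * L * (sqrtm M)⁻¹) * M +
        M * ((sqrtm M)⁻¹ * L * (sqrtm M)⁻¹) * (sqrtm M * X * sqrtm M) =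
      sqrtm M * S₁ * sqrtm M ∧
    (((sqrtm M)⁻¹ * L * (sqrtm M)⁻¹) * (sqrtm M * S₂ * sqrtm M)).trace = (L * S₂).trace :=
  ⟨generalized_lyapunov_congr (isUnit_det_sqrtm hM) (sqrtm_mul_self hM.posSemidef) hL,
    trace_inv_congr_mul_congr (isUnit_det_sqrtm hM) L S₂⟩

/-- For symmetric positive-definite `M`, `X`, symmetric `S_1`, `S_2`, and `L` solving
`X·L + L·X = S_1`, the matrix `L' = M^{-1/2}·L·M^{-1/2}` solves the generalized Lyapunov
equation `(M^{1/2}XM^{1/2})·L'·M + M·L'·(M^{1/2}XM^{1/2}) = M^{1/2}S_1M^{1/2}`, and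
`tr(L'·(M^{1/2}S_2M^{1/2})) = tr(L·S_2)`: the map `φ(X) = M^{1/2}XM^{1/2}` pulls the
generalized Bures–Wasserstein inner product with parameter `M` back to the
Bures–Wasserstein inner product. -/
theorem stmt_7 {d : ℕ} (M X : Matrix (Fin d) (Fin d) ℝ) (hM : M.PosDef) (hX : X.PosDef)
    (S₁ S₂ : Matrix (Fin d) (Fin d) ℝ) (hS₁ : S₁ᵀ = S₁) (hS₂ : S₂ᵀ = S₂)
    (L : Matrix (Fin d) (Fin d) ℝ) (hL : X * L + L * X = S₁) :
    (sqrtm M * X * sqrtm M) * ((sqrtm M)⁻¹ * L * (sqrtm M)⁻¹) * M +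
        M * ((sqrtm M)⁻¹ * L * (sqrtm M)⁻¹) * (sqrtm M * X * sqrtm M) =
      sqrtm M * S₁ * sqrtm M ∧
    (((sqrtm M)⁻¹ * L * (sqrtm M)⁻¹) * (sqrtm M * S₂ * sqrtm M)).trace = (L * S₂).trace :=
  stmt_7_general M X hM S₁ S₂ L hL
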